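/- arXiv:1505.03906 — 2 statements merged into one kernel-verified Lean document; each statement's English description precedes it below -/
import Mathlib

section
/- (McDiarmid's inequality) Let f : X_1 × ⋯ × X_N → ℝ satisfy the bounded differences condition with constants c_1,…,c_N ≥ 0: changing the k-th coordinate changes f by at most c_k. Then for independent random variables ξ_1,…,ξ_N and every ε > 0, P(f(ξ_1,…,ξ_N) − E[f(ξ_1,…,ξ_N)] ≥ ε) ≤ exp(−2ε² / Σ_{n=1}^N c_n²). -/
/-!
Since the `ξ i` are independent, the law of `ξ` is the product of their laws, so it suffices to
show that `f - E f` is sub-Gaussian with parameter `∑ c i ^ 2 / 4` under a product measure and to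
apply the Chernoff bound. Induct on the number of coordinates: for fixed values `y` of the other
coordinates, `x ↦ f (x, y)` takes values in an interval of length `c 0`, so by Hoeffding's lemma
`f (x, y) - g y`, with `g y = ∫ f (x, y) dx`, is sub-Gaussian with parameter `c 0 ^ 2 / 4`
conditionally on `y`. The function `g` again has bounded differences, with the constants of the
remaining coordinates, and the same mean as `f`, so the induction hypothesis applies to `g - E g`.
-/

open MeasureTheory ProbabilityTheory Real
open scoped NNReal

def HasBoundedDifferences {ι : Type*} [DecidableEq ι] {X : ι → Type*} (f : (∀ i, X i) → ℝ)
    (c : ι → ℝ) : Prop :=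
  ∀ i (x : ∀ i, X i) (x' : X i), |f x - f (Function.update x i x')| ≤ c i

namespace HasBoundedDifferences

section

variable {ι : Type*} [DecidableEq ι] {X : ι → Type*} {f : (∀ i, X i) → ℝ} {c : ι → ℝ}

lemma abs_sub_piecewise_le (hf : HasBoundedDifferences f c) (s : Finset ι) (x y : ∀ i, X i) :
    |f (s.piecewise y x) - f x| ≤ ∑ i ∈ s, c i := by
  induction s using Finset.induction_on with
  | empty => simp
  | insert i s hi ih =>
    rw [Finset.piecewise_insert, Finset.sum_insert hi]
    set z := s.piecewise y x
    calc |f (Function.update z i (y i)) - f x|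
        ≤ |f z - f (Function.update z i (y i))| + |f z - f x| := by
          rw [abs_sub_comm (f z)]; exact abs_sub_le _ _ _
      _ ≤ c i + ∑ j ∈ s, c j := add_le_add (hf i z (y i)) ih

lemma exists_abs_le [Fintype ι] [Nonempty (∀ i, X i)] (hf : HasBoundedDifferences f c) :
    ∃ C, ∀ x, |f x| ≤ C := by
  obtain ⟨x₀⟩ := ‹Nonempty (∀ i, X i)›
  refine ⟨|f x₀| + ∑ i, c i, fun x => ?_⟩
  have h := hf.abs_sub_piecewise_le Finset.univ x₀ x
  rw [Finset.piecewise_univ] at h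
  linarith [abs_sub_abs_le_abs_sub (f x) (f x₀)]

lemma integral {α : Type*} [MeasurableSpace α] {ν : Measure α} [IsProbabilityMeasure ν]
    {F : α → (∀ i, X i) → ℝ} (hF : ∀ a, HasBoundedDifferences (F a) c)
    (hint : ∀ x, Integrable (fun a => F a x) ν) :
    HasBoundedDifferences (fun x => ∫ a, F a x ∂ν) c := by
  intro i x x'
  rw [← integral_sub (hint _) (hint _)]
  simpa using norm_integral_le_of_norm_le_const (μ := ν)
    (f := fun a => F a x - F a (Function.update x i x'))
    (ae_of_all _ fun a => (Real.norm_eq_abs _).trans_le (hF a i x x'))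

end

lemma insertNth {n : ℕ} {X : Fin (n + 1) → Type*} {f : (∀ i, X i) → ℝ} {c : Fin (n + 1) → ℝ}
    (hf : HasBoundedDifferences f c) (p : Fin (n + 1)) (x : X p) :
    HasBoundedDifferences (fun y => f (p.insertNth x y)) (fun j => c (p.succAbove j)) := by
  intro j y y'
  simpa [Fin.insertNth_update] using hf (p.succAbove j) (p.insertNth x y) y'

end HasBoundedDifferences

lemma exists_forall_mem_Icc_of_abs_sub_le {α : Type*} [Nonempty α] {u : α → ℝ} {c : ℝ}
    (h : ∀ x y, |u x - u y| ≤ c) : ∃ a, ∀ x, u x ∈ Set.Icc a (a + c) := by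
  obtain ⟨x₀⟩ := ‹Nonempty α›
  have hbdd : BddBelow (Set.range u) :=
    ⟨u x₀ - c, by rintro _ ⟨x, rfl⟩; linarith [(abs_le.1 (h x₀ x)).2]⟩
  refine ⟨⨅ x, u x, fun x => ⟨ciInf_le hbdd x, ?_⟩⟩
  have : u x - c ≤ ⨅ y, u y := le_ciInf fun y => by linarith [(abs_le.1 (h x y)).2]
  linarith

namespace ProbabilityTheory

lemma hasSubgaussianMGF_sub_integral_of_abs_sub_le {α : Type*} [MeasurableSpace α]
    {ν : Measure α} [IsProbabilityMeasure ν] {u : α → ℝ} (hu : Measurable u) {c : ℝ}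
    (h : ∀ x y, |u x - u y| ≤ c) :
    HasSubgaussianMGF (fun x => u x - ∫ y, u y ∂ν) ((‖c‖₊ / 2) ^ 2) ν := by
  have := nonempty_of_isProbabilityMeasure ν
  obtain ⟨a, ha⟩ := exists_forall_mem_Icc_of_abs_sub_le h
  simpa using hasSubgaussianMGF_of_mem_Icc hu.aemeasurable (ae_of_all _ ha)

lemma HasSubgaussianMGF.comp_snd_add_of_forall {α β : Type*} [MeasurableSpace α]
    [MeasurableSpace β] {ν : Measure α} {ρ : Measure β} [IsProbabilityMeasure ν]
    [IsProbabilityMeasure ρ] {G : β → ℝ} {Z : α × β → ℝ} {cG cZ : ℝ≥0}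
    (hG : HasSubgaussianMGF G cG ρ) (hZ : ∀ y, HasSubgaussianMGF (fun x => Z (x, y)) cZ ν)
    (hZm : Measurable Z) {C : ℝ} (hZC : ∀ p, |Z p| ≤ C) :
    HasSubgaussianMGF (fun p => G p.2 + Z p) (cG + cZ) (ν.prod ρ) := by
  have hint : ∀ t, Integrable (fun p : α × β => exp (t * G p.2) * exp (t * Z p)) (ν.prod ρ) :=
    fun t => ((hG.integrable_exp_mul t).comp_snd ν).mul_bdd (c := exp (|t| * C)) (by fun_prop)
      (ae_of_all _ fun p => by
        rw [Real.norm_eq_abs, abs_exp, exp_le_exp]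
        exact (le_abs_self _).trans <| (abs_mul t (Z p)).trans_le <|
          mul_le_mul_of_nonneg_left (hZC p) (abs_nonneg t))
  refine ⟨fun t => by simpa only [mul_add, exp_add] using hint t, fun t => ?_⟩
  calc mgf (fun p => G p.2 + Z p) (ν.prod ρ) t
      = ∫ y, exp (t * G y) * mgf (fun x => Z (x, y)) ν t ∂ρ := by
        simp only [mgf, mul_add, exp_add]
        rw [integral_prod_symm _ (hint t)]
        simp only [integral_const_mul]
    _ ≤ ∫ y, exp (t * G y) * exp (cZ * t ^ 2 / 2) ∂ρ := by
        refine integral_mono_of_nonneg (ae_of_all _ fun y => mul_nonneg (exp_pos _).le mgf_nonneg)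
          ((hG.integrable_exp_mul t).mul_const _) (ae_of_all _ fun y => ?_)
        exact mul_le_mul_of_nonneg_left ((hZ y).mgf_le t) (exp_pos _).le
    _ = mgf G ρ t * exp (cZ * t ^ 2 / 2) := integral_mul_const _ _
    _ ≤ exp (cG * t ^ 2 / 2) * exp (cZ * t ^ 2 / 2) := by gcongr; exact hG.mgf_le t
    _ = exp (↑(cG + cZ) * t ^ 2 / 2) := by rw [← exp_add]; push_cast; ring_nf

end ProbabilityTheory

theorem HasBoundedDifferences.hasSubgaussianMGF_pi {n : ℕ} {X : Fin n → Type*}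
    [∀ i, MeasurableSpace (X i)] (ν : ∀ i, Measure (X i)) [∀ i, IsProbabilityMeasure (ν i)]
    {f : (∀ i, X i) → ℝ} {c : Fin n → ℝ} (hfm : Measurable f) (hf : HasBoundedDifferences f c) :
    HasSubgaussianMGF (fun x => f x - ∫ y, f y ∂Measure.pi ν) (∑ i, (‖c i‖₊ / 2) ^ 2)
      (Measure.pi ν) := by
  induction n with
  | zero =>
    have hconst : ∀ x y : ∀ i, X i, f x = f y := fun x y => congrArg f (Subsingleton.elim x y)
    have : (fun x => f x - ∫ y, f y ∂Measure.pi ν) = fun _ => 0 :=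
      funext fun x => by rw [integral_eq_const (ae_of_all _ fun y => hconst y x), sub_self]
    simp [this]
  | succ n ih =>
    have := fun i => nonempty_of_isProbabilityMeasure (ν i)
    obtain ⟨C, hC⟩ := hf.exists_abs_le
    let e := MeasurableEquiv.piFinSuccAbove X 0
    let F : X 0 × (∀ j, X (Fin.succAbove 0 j)) → ℝ := fun z => f (Fin.insertNth 0 z.1 z.2)
    have hFm : Measurable F := hfm.comp e.symm.measurable
    have hFint : ∀ y, Integrable (fun x => F (x, y)) (ν 0) := fun y =>
      .of_bound (hFm.comp measurable_prodMk_right).aestronglyMeasurable C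
        (ae_of_all _ fun _ => hC _)
    let g : (∀ j, X (Fin.succAbove 0 j)) → ℝ := fun y => ∫ x, F (x, y) ∂ν 0
    have hgm : Measurable g := hFm.stronglyMeasurable.integral_prod_left'.measurable
    have hg : HasBoundedDifferences g (fun j => c (Fin.succAbove 0 j)) :=
      HasBoundedDifferences.integral (fun x => hf.insertNth 0 x) hFint
    obtain ⟨D, hD⟩ := hg.exists_abs_le
    have hmp := measurePreserving_piFinSuccAbove ν 0
    have hFe : ∀ x, F (e x) = f x := fun x => congrArg f (e.symm_apply_apply x)
    have hmean :
        ∫ y, g y ∂Measure.pi (fun j => ν (Fin.succAbove 0 j)) = ∫ x, f x ∂Measure.pi ν := by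
      rw [← integral_prod_symm F
          (.of_bound hFm.aestronglyMeasurable C (ae_of_all _ fun _ => hC _)),
        ← hmp.integral_comp']
      exact integral_congr_ae (ae_of_all _ hFe)
    have hG := ih (fun j => ν (Fin.succAbove 0 j)) hgm hg
    rw [hmean] at hG
    have hprod := hG.comp_snd_add_of_forall
      (fun y => hasSubgaussianMGF_sub_integral_of_abs_sub_le (hFm.comp measurable_prodMk_right)
        fun x x' => by simpa [F] using hf 0 (Fin.insertNth 0 x y) x')
      (hFm.sub (hgm.comp measurable_snd)) (C := C + D)
      (fun z => (abs_sub _ _).trans (add_le_add (hC _) (hD _)))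
    rw [← hmp.map_eq] at hprod
    convert hprod.of_map e.measurable.aemeasurable using 1
    · funext x
      simp only [Function.comp_apply, Pi.sub_apply, hFe]
      ring
    · rw [Fin.sum_univ_succAbove _ 0, add_comm]

theorem mcdiarmid_inequality_general
    (N : ℕ) (𝒳 : Fin N → Type*) (m𝒳 : ∀ i, MeasurableSpace (𝒳 i))
    (f : (∀ i, 𝒳 i) → ℝ)
    (hfmeas : Measurable f)
    (c : Fin N → ℝ)
    (hbd : ∀ (i : Fin N) (x : ∀ j, 𝒳 j) (x' : 𝒳 i),
      |f x - f (Function.update x i x')| ≤ c i)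
    (Ω : Type*) [MeasurableSpace Ω] (μ : Measure Ω) [IsProbabilityMeasure μ]
    (ξ : ∀ i, Ω → 𝒳 i) (hξmeas : ∀ i, Measurable (ξ i))
    (hindep : iIndepFun (m := m𝒳) ξ μ)
    (ε : ℝ) (hε : 0 < ε) :
    μ {ω | f (fun i => ξ i ω) - (∫ ω', f (fun i => ξ i ω') ∂μ) ≥ ε}
      ≤ ENNReal.ofReal (Real.exp (-2 * ε ^ 2 / ∑ i, (c i) ^ 2)) := by
  have := fun i => Measure.isProbabilityMeasure_map (μ := μ) (hξmeas i).aemeasurable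
  have hΦ : Measurable fun ω i => ξ i ω := measurable_pi_lambda _ hξmeas
  have hsub := HasBoundedDifferences.hasSubgaussianMGF_pi (fun i => μ.map (ξ i)) hfmeas hbd
  rw [← hindep.map_fun_eq_pi_map fun i => (hξmeas i).aemeasurable] at hsub
  replace hsub := hsub.of_map hΦ.aemeasurable
  rw [integral_map hΦ.aemeasurable hfmeas.aestronglyMeasurable] at hsub
  rw [← ofReal_measureReal]
  refine (ENNReal.ofReal_le_ofReal (hsub.measure_ge_le hε.le)).trans_eq ?_
  congr 2
  push_cast
  simp only [Real.norm_eq_abs, div_pow, sq_abs, ← Finset.sum_div]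
  ring

/-- McDiarmid's inequality: if `f` satisfies the bounded differences
condition with constants `c k ≥ 0` and `ξ₁,…,ξ_N` are independent random variables,
then `P(f(ξ) - E[f(ξ)] ≥ ε) ≤ exp(-2ε²/∑ c k²)` for every `ε > 0`. -/
theorem mcdiarmid_inequality
    (N : ℕ) (𝒳 : Fin N → Type*) (m𝒳 : ∀ i, MeasurableSpace (𝒳 i))
    (f : (∀ i, 𝒳 i) → ℝ)
    (hfmeas : Measurable f)
    (c : Fin N → ℝ) (hc : ∀ i, 0 ≤ c i)
    (hbd : ∀ (i : Fin N) (x : ∀ j, 𝒳 j) (x' : 𝒳 i),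
      |f x - f (Function.update x i x')| ≤ c i)
    (Ω : Type*) [MeasurableSpace Ω] (μ : Measure Ω) [IsProbabilityMeasure μ]
    (ξ : ∀ i, Ω → 𝒳 i) (hξmeas : ∀ i, Measurable (ξ i))
    (hindep : iIndepFun (m := m𝒳) ξ μ)
    (hint : Integrable (fun ω => f (fun i => ξ i ω)) μ)
    (ε : ℝ) (hε : 0 < ε) :
    μ {ω | f (fun i => ξ i ω) - (∫ ω', f (fun i => ξ i ω') ∂μ) ≥ ε}
      ≤ ENNReal.ofReal (Real.exp (-2 * ε ^ 2 / ∑ i, (c i) ^ 2)) :=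
  mcdiarmid_inequality_general N 𝒳 m𝒳 f hfmeas c hbd Ω μ ξ hξmeas hindep ε hε
end

section
/- Let H be the unit ball in a universal RKHS on a compact metric space X with continuous kernel k. Then for Borel probability measures p, q on X, MMD[H, p, q] = 0 if and only if p = q. -/
open MeasureTheory

/-!
The MMD is the dual norm of `f ↦ ∫ ι f dp - ∫ ι f dq` on `H`, a bounded functional because a
continuous kernel on a compact space has bounded features `‖φ x‖ = √(k x x)`. So it vanishes iff
`∫ g dp = ∫ g dq` for every `g` in the range of `ι`, hence, by universality and continuity of
integration in the sup norm, for every `g ∈ C(X, ℝ)`; and finite Borel measures on a metric space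
are determined by their integrals of continuous functions.
-/

namespace ContinuousLinearMap

variable {E : Type*} [NormedAddCommGroup E] [NormedSpace ℝ E]

theorem iSup_unitClosedBall_eq_norm (L : E →L[ℝ] ℝ) :
    (⨆ f : {f : E // ‖f‖ ≤ 1}, L f) = ‖L‖ := by
  have hnonempty : Nonempty {f : E // ‖f‖ ≤ 1} := ⟨⟨0, by simp⟩⟩
  have hbdd : BddAbove (Set.range fun f : {f : E // ‖f‖ ≤ 1} => L f) :=
    ⟨‖L‖, by rintro _ ⟨f, rfl⟩; exact (le_abs_self _).trans (L.unit_le_opNorm f f.2)⟩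
  refine le_antisymm (ciSup_le fun f => (le_abs_self _).trans (L.unit_le_opNorm f f.2)) ?_
  rw [← L.sSup_unitClosedBall_eq_norm]
  refine csSup_le ((Metric.nonempty_closedBall.2 zero_le_one).image _) ?_
  rintro _ ⟨f, hball, rfl⟩
  have hf : ‖f‖ ≤ 1 := mem_closedBall_zero_iff.1 hball
  have hnf : ‖-f‖ ≤ 1 := by rwa [norm_neg]
  refine abs_le'.2 ⟨le_ciSup hbdd ⟨f, hf⟩, ?_⟩
  simpa only [map_neg] using le_ciSup hbdd ⟨-f, hnf⟩

end ContinuousLinearMap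

namespace ContinuousMap

variable {X : Type*} [TopologicalSpace X] [CompactSpace X] [MeasurableSpace X]

noncomputable def integralCLM [OpensMeasurableSpace X] (μ : Measure X) [IsFiniteMeasure μ] :
    C(X, ℝ) →L[ℝ] ℝ :=
  LinearMap.mkContinuous
    { toFun := fun g => ∫ x, g x ∂μ
      map_add' := fun f g =>
        integral_add (f.continuous.integrable_of_hasCompactSupport (.of_compactSpace f))
          (g.continuous.integrable_of_hasCompactSupport (.of_compactSpace g))
      map_smul' := fun c g => integral_const_mul c _ }
    (μ.real Set.univ)
    fun g => by
      rw [mul_comm]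
      exact norm_integral_le_of_norm_le_const (.of_forall g.norm_coe_le_norm)

theorem integralCLM_inj [HasOuterApproxClosed X] [BorelSpace X] {μ ν : Measure X}
    [IsFiniteMeasure μ] [IsFiniteMeasure ν] : integralCLM μ = integralCLM ν ↔ μ = ν := by
  refine ⟨fun h => ext_of_forall_integral_eq_of_IsFiniteMeasure fun f => ?_, fun h => h ▸ rfl⟩
  exact congrArg (· f.toContinuousMap) h

end ContinuousMap

section FeatureMap

variable {X : Type*} [TopologicalSpace X] {H : Type*} [NormedAddCommGroup H]
  [InnerProductSpace ℝ H] {φ : X → H}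

theorem exists_norm_le_of_continuous_inner_self [CompactSpace X]
    (hφ : Continuous fun x => inner ℝ (φ x) (φ x)) : ∃ C, 0 ≤ C ∧ ∀ x, ‖φ x‖ ≤ C := by
  have hnorm : Continuous fun x => ‖φ x‖ := by
    simpa only [real_inner_self_eq_norm_sq, Real.sqrt_sq (norm_nonneg _)] using hφ.sqrt
  obtain ⟨C, hC⟩ := (isCompact_range hnorm).bddAbove
  exact ⟨max C 0, le_max_right _ _, fun x => (hC ⟨x, rfl⟩).trans (le_max_left _ _)⟩

theorem norm_le_mul_of_apply_eq_inner {ι : H →ₗ[ℝ] C(X, ℝ)} [CompactSpace X]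
    (hrepr : ∀ (f : H) (x : X), (ι f) x = inner ℝ f (φ x)) {C : ℝ} (hC0 : 0 ≤ C)
    (hC : ∀ x, ‖φ x‖ ≤ C) (f : H) : ‖ι f‖ ≤ C * ‖f‖ := by
  refine (ContinuousMap.norm_le _ (by positivity)).2 fun x => ?_
  calc ‖ι f x‖ = |inner ℝ f (φ x)| := by rw [hrepr, Real.norm_eq_abs]
    _ ≤ ‖f‖ * ‖φ x‖ := abs_real_inner_le_norm f (φ x)
    _ ≤ C * ‖f‖ := by rw [mul_comm]; gcongr; exact hC x

end FeatureMap

/-- Gretton et al.: let `H` be a universal RKHS on a compact metric space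
`X` (i.e. the inclusion `ι : H → C(X,ℝ)` has dense range in the sup norm) with continuous
kernel `k` (feature map `φ`, reproducing property `(ι f) x = ⟪f, φ x⟫`). Then for Borel
probability measures `p, q` on `X`, the MMD over the unit ball of `H` is zero if and
only if `p = q`. -/
theorem universal_rkhs_mmd_zero_iff_eq
    (X : Type*) [MetricSpace X] [CompactSpace X] [MeasurableSpace X] [BorelSpace X]
    (H : Type*) [NormedAddCommGroup H] [InnerProductSpace ℝ H]
    (ι : H →ₗ[ℝ] C(X, ℝ))
    (huniversal : Dense (Set.range ι))
    (φ : X → H) (k : X → X → ℝ)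
    (hk : ∀ x y, k x y = inner ℝ (φ x) (φ y))
    (hkcont : Continuous fun xy : X × X => k xy.1 xy.2)
    (hrepr : ∀ (f : H) (x : X), (ι f) x = inner ℝ f (φ x))
    (p q : Measure X) [IsProbabilityMeasure p] [IsProbabilityMeasure q] :
    (⨆ f : {f : H // ‖f‖ ≤ 1}, (∫ x, (ι f.1) x ∂p - ∫ x, (ι f.1) x ∂q)) = 0 ↔ p = q := by
  obtain ⟨C, hC0, hC⟩ := exists_norm_le_of_continuous_inner_self <|
    (hkcont.comp (continuous_id.prodMk continuous_id)).congr fun x => hk x x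
  let ιL : H →L[ℝ] C(X, ℝ) := ι.mkContinuous C (norm_le_mul_of_apply_eq_inner hrepr hC0 hC)
  let D := ContinuousMap.integralCLM p - ContinuousMap.integralCLM q
  have hmmd : (⨆ f : {f : H // ‖f‖ ≤ 1}, (∫ x, (ι f.1) x ∂p - ∫ x, (ι f.1) x ∂q)) =
      ‖D ∘L ιL‖ :=
    (D ∘L ιL).iSup_unitClosedBall_eq_norm
  have hdense : D ∘L ιL = 0 ↔ D = 0 := by
    refine ⟨fun h => ?_, fun h => by simp [h]⟩
    exact DFunLike.coe_injective <|
      DenseRange.equalizer huniversal D.continuous continuous_zero (congrArg (⇑) h)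
  rw [hmmd, norm_eq_zero, hdense, sub_eq_zero, ContinuousMap.integralCLM_inj]
end
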